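/- The expected σ²-derivative of the noisy-covariate negative log-likelihood at the true parameter equals the explicit bias term: E[∂L*/∂σ² (θ0)] = −(1/2) λx² (β02ᵀ β02) tr(Ω0⁻²). -/

import Mathlib

open MeasureTheory ProbabilityTheory Matrix
open scoped Matrix

namespace PSAR

/-- `S(ρ) = I_N − ρ W`. -/
noncomputable def Smat {N : ℕ} (W : Matrix (Fin N) (Fin N) ℝ) (ρ : ℝ) :
    Matrix (Fin N) (Fin N) ℝ :=
  1 - ρ • W

/-- `Ω(ρ, σ²) = σ² I_N + λ² S(ρ) S(ρ)ᵀ`. -/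
noncomputable def Omat {N : ℕ} (W : Matrix (Fin N) (Fin N) ℝ) (lam2 ρ σ2 : ℝ) :
    Matrix (Fin N) (Fin N) ℝ :=
  σ2 • (1 : Matrix (Fin N) (Fin N) ℝ) + lam2 • (Smat W ρ * (Smat W ρ)ᵀ)

/-- `𝕎S(ρ) = W S(ρ)ᵀ + S(ρ) Wᵀ`. -/
noncomputable def WSmat {N : ℕ} (W : Matrix (Fin N) (Fin N) ℝ) (ρ : ℝ) :
    Matrix (Fin N) (Fin N) ℝ :=
  W * (Smat W ρ)ᵀ + Smat W ρ * Wᵀ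

/-- `𝕎(ρ) = Wᵀ S(ρ) + S(ρ)ᵀ W` (least squares version). -/
noncomputable def WLSmat {N : ℕ} (W : Matrix (Fin N) (Fin N) ℝ) (ρ : ℝ) :
    Matrix (Fin N) (Fin N) ℝ :=
  Wᵀ * Smat W ρ + (Smat W ρ)ᵀ * W

/-- The negative log-likelihood
`L(θ) = −log det S(ρ) + (1/2) log det Ω(ρ,σ²) + (1/2)(S(ρ)Ys − Xβ)ᵀ Ω(ρ,σ²)⁻¹ (S(ρ)Ys − Xβ)`. -/
noncomputable def nll {N p1 p2 : ℕ} (W : Matrix (Fin N) (Fin N) ℝ) (lam2 : ℝ)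
    (X : Matrix (Fin N) (Fin p1 ⊕ Fin p2) ℝ) (Ys : Fin N → ℝ)
    (ρ : ℝ) (β : Fin p1 ⊕ Fin p2 → ℝ) (σ2 : ℝ) : ℝ :=
  - Real.log (Smat W ρ).det + (1 / 2) * Real.log (Omat W lam2 ρ σ2).det
    + (1 / 2) * ((Smat W ρ *ᵥ Ys - X *ᵥ β) ⬝ᵥ
        ((Omat W lam2 ρ σ2)⁻¹ *ᵥ (Smat W ρ *ᵥ Ys - X *ᵥ β)))

/-- Diagonal matrix `d(ρ)` with `d(ρ)_{ii} = 1/(S(ρ)ᵀ S(ρ))_{ii}`. -/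
noncomputable def dmat {N : ℕ} (W : Matrix (Fin N) (Fin N) ℝ) (ρ : ℝ) :
    Matrix (Fin N) (Fin N) ℝ :=
  Matrix.diagonal fun i => ((((Smat W ρ)ᵀ * Smat W ρ) i i)⁻¹)

/-- Entrywise first derivative `ḋ(ρ)` of `d(ρ)` in `ρ`. -/
noncomputable def dmatDot {N : ℕ} (W : Matrix (Fin N) (Fin N) ℝ) (ρ : ℝ) :
    Matrix (Fin N) (Fin N) ℝ :=
  Matrix.diagonal fun i => deriv (fun r => ((((Smat W r)ᵀ * Smat W r) i i)⁻¹)) ρ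

/-- Entrywise second derivative `d̈(ρ)` of `d(ρ)` in `ρ`. -/
noncomputable def dmatDDot {N : ℕ} (W : Matrix (Fin N) (Fin N) ℝ) (ρ : ℝ) :
    Matrix (Fin N) (Fin N) ℝ :=
  Matrix.diagonal fun i => deriv (deriv (fun r => ((((Smat W r)ᵀ * Smat W r) i i)⁻¹))) ρ

/-- Least squares objective `L_LS(γ) = ‖d(ρ) S(ρ)ᵀ (S(ρ)Y − Xβ)‖²`. -/
noncomputable def lsObj {N p1 p2 : ℕ} (W : Matrix (Fin N) (Fin N) ℝ)
    (X : Matrix (Fin N) (Fin p1 ⊕ Fin p2) ℝ) (Y : Fin N → ℝ)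
    (ρ : ℝ) (β : Fin p1 ⊕ Fin p2 → ℝ) : ℝ :=
  ((dmat W ρ * (Smat W ρ)ᵀ) *ᵥ (Smat W ρ *ᵥ Y - X *ᵥ β)) ⬝ᵥ
    ((dmat W ρ * (Smat W ρ)ᵀ) *ᵥ (Smat W ρ *ᵥ Y - X *ᵥ β))

/-- Observed response `Y* = S0⁻¹(Xβ0 + E) + ε`. -/
noncomputable def Yobs {N p1 p2 : ℕ} (W : Matrix (Fin N) (Fin N) ℝ) (ρ0 : ℝ)
    (X : Matrix (Fin N) (Fin p1 ⊕ Fin p2) ℝ) (β0 : Fin p1 ⊕ Fin p2 → ℝ)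
    (E ε : Fin N → ℝ) : Fin N → ℝ :=
  (Smat W ρ0)⁻¹ *ᵥ (X *ᵥ β0 + E) + ε

/-- True response `Y = S0⁻¹(Xβ0 + E)`. -/
noncomputable def Ytrue {N p1 p2 : ℕ} (W : Matrix (Fin N) (Fin N) ℝ) (ρ0 : ℝ)
    (X : Matrix (Fin N) (Fin p1 ⊕ Fin p2) ℝ) (β0 : Fin p1 ⊕ Fin p2 → ℝ)
    (E : Fin N → ℝ) : Fin N → ℝ :=
  (Smat W ρ0)⁻¹ *ᵥ (X *ᵥ β0 + E)

/-- Observed covariates `X* = (X1, X2 + Ex)`. -/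
noncomputable def Xobs {N p1 p2 : ℕ} (X : Matrix (Fin N) (Fin p1 ⊕ Fin p2) ℝ)
    (Ex : Fin N → Fin p2 → ℝ) : Matrix (Fin N) (Fin p1 ⊕ Fin p2) ℝ :=
  X + Matrix.of fun i j => Sum.elim (fun _ => (0 : ℝ)) (fun k => Ex i k) j

/-- All the noise entries of `E`, `ε`, `Ex` gathered as a single family. -/
def noiseFam {Ωs : Type*} {N p2 : ℕ} (E ε : Ωs → Fin N → ℝ)
    (Ex : Ωs → Fin N → Fin p2 → ℝ) :
    (Fin N ⊕ Fin N ⊕ Fin N × Fin p2) → Ωs → ℝ :=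
  fun z ω => Sum.elim (fun i => E ω i) (Sum.elim (fun i => ε ω i) (fun q => Ex ω q.1 q.2)) z

end PSAR

/-!
Write `Ω(s) = s I + λ² S₀ S₀ᵀ`. Diagonalising `λ² S₀ S₀ᵀ` by an orthogonal matrix reduces the
`σ²`-derivative of `L*` to scalar calculus:
`∂L*/∂σ² = ½ tr Ω⁻¹ − ½ rᵀ Ω⁻² r` with residual `r = S₀ Y* − X* β₀`.
At the true parameter `r = E + S₀ ε − Ex β₀₂` is a linear image `C ζ` of the vector `ζ` of all
noise entries, which are independent and centred, so `E[r rᵀ] = C diag(Var ζ) Cᵀ = Ω₀ + c I`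
with `c = λx² ‖β₀₂‖²`. Hence `E[rᵀ Ω₀⁻² r] = tr(Ω₀⁻² (Ω₀ + c I)) = tr Ω₀⁻¹ + c tr Ω₀⁻²`, and
the `tr Ω₀⁻¹` terms cancel.
-/

namespace Matrix

open Filter Topology

variable {n : Type*} [Fintype n]

theorem dotProduct_mulVec_self_eq_sum (K : Matrix n n ℝ) (v : n → ℝ) :
    v ⬝ᵥ (K *ᵥ v) = ∑ j, ∑ i, K i j * (v i * v j) := by
  rw [dot_mulVec_eq_sum_sum]
  exact Finset.sum_congr rfl fun j _ => Finset.sum_congr rfl fun i _ => by ring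

theorem dotProduct_transpose_mul_mul_mulVec {m : Type*} [Fintype m] (C : Matrix m n ℝ)
    (M : Matrix m m ℝ) (z : n → ℝ) :
    (C *ᵥ z) ⬝ᵥ (M *ᵥ (C *ᵥ z)) = z ⬝ᵥ ((Cᵀ * M * C) *ᵥ z) := by
  rw [← mulVec_mulVec, ← mulVec_mulVec, dotProduct_mulVec z, vecMul_transpose]

theorem dotProduct_conj_mulVec (U M : Matrix n n ℝ) (v : n → ℝ) :
    v ⬝ᵥ ((U * M * star U) *ᵥ v) = (star U *ᵥ v) ⬝ᵥ (M *ᵥ (star U *ᵥ v)) := by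
  rw [← mulVec_mulVec, ← mulVec_mulVec, dotProduct_mulVec, ← mulVec_transpose]
  rfl

variable [DecidableEq n]

section UnitaryConj

variable {U : Matrix n n ℝ} {M N : Matrix n n ℝ}

theorem det_unitary_conj (hU : U ∈ unitaryGroup n ℝ) : det (U * M * star U) = det M := by
  rw [det_mul, det_mul, mul_right_comm, ← det_mul, mem_unitaryGroup_iff.1 hU, det_one, one_mul]

theorem trace_unitary_conj (hU : U ∈ unitaryGroup n ℝ) : trace (U * M * star U) = trace M := by
  rw [trace_mul_cycle, mem_unitaryGroup_iff'.1 hU, one_mul]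

theorem inv_unitary_conj (hU : U ∈ unitaryGroup n ℝ) :
    (U * M * star U)⁻¹ = U * M⁻¹ * star U := by
  rw [mul_inv_rev, mul_inv_rev, inv_eq_left_inv (mem_unitaryGroup_iff'.1 hU),
    inv_eq_left_inv (mem_unitaryGroup_iff.1 hU), mul_assoc]

theorem unitary_conj_mul_unitary_conj (hU : U ∈ unitaryGroup n ℝ) :
    (U * M * star U) * (U * N * star U) = U * (M * N) * star U := by
  simp only [mul_assoc]
  rw [← mul_assoc (star U) U, mem_unitaryGroup_iff'.1 hU, one_mul]

end UnitaryConj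

theorem IsHermitian.smul_one_add_eq {A : Matrix n n ℝ} (hA : A.IsHermitian) (s : ℝ) :
    s • 1 + A = (hA.eigenvectorUnitary : Matrix n n ℝ) * diagonal (fun i => s + hA.eigenvalues i)
      * star (hA.eigenvectorUnitary : Matrix n n ℝ) := by
  set U : Matrix n n ℝ := (hA.eigenvectorUnitary : Matrix n n ℝ)
  have hU : U * star U = 1 := mem_unitaryGroup_iff.1 hA.eigenvectorUnitary.2
  have hdiag : diagonal (fun i => s + hA.eigenvalues i) = s • 1 + diagonal hA.eigenvalues := by
    rw [smul_one_eq_diagonal, diagonal_add]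
  conv_lhs => rw [hA.spectral_theorem, Unitary.conjStarAlgAut_apply]
  rw [hdiag, mul_add, add_mul, Matrix.mul_smul, mul_one, Matrix.smul_mul, hU]
  rfl

theorem trace_inv_mul_inv_mul_add_smul_one {A : Matrix n n ℝ} (hA : IsUnit A.det) (c : ℝ) :
    trace (A⁻¹ * A⁻¹ * (A + c • 1)) = trace A⁻¹ + c * trace (A⁻¹ * A⁻¹) := by
  rw [Matrix.mul_add, Matrix.mul_smul, Matrix.mul_one, Matrix.mul_assoc, nonsing_inv_mul _ hA,
    Matrix.mul_one, trace_add, trace_smul, smul_eq_mul]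

theorem inv_diagonal_of_ne_zero {d : n → ℝ} (hd : ∀ i, d i ≠ 0) :
    (diagonal d)⁻¹ = diagonal d⁻¹ :=
  inv_eq_right_inv <| by
    rw [diagonal_mul_diagonal, ← diagonal_one]
    exact congrArg diagonal (funext fun i => mul_inv_cancel₀ (hd i))

-- `Real.log` is `log |·|`, so no sign condition on `σ + d i` is needed.
theorem hasDerivAt_log_det_diagonal_add_dotProduct_inv_mulVec (d w : n → ℝ) {σ : ℝ}
    (hσ : ∀ i, σ + d i ≠ 0) :
    HasDerivAt (fun s => Real.log (diagonal fun i => s + d i).det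
        + w ⬝ᵥ ((diagonal fun i => s + d i)⁻¹ *ᵥ w))
      (trace (diagonal fun i => σ + d i)⁻¹
        - w ⬝ᵥ (((diagonal fun i => σ + d i)⁻¹ * (diagonal fun i => σ + d i)⁻¹) *ᵥ w)) σ := by
  have hnear : ∀ᶠ s in 𝓝 σ, ∀ i, s + d i ≠ 0 :=
    eventually_all.2 fun i =>
      (continuous_id.add continuous_const).continuousAt.eventually_ne (hσ i)
  have hlog : HasDerivAt (fun s => ∑ i, Real.log (s + d i)) (∑ i, (σ + d i)⁻¹) σ :=
    HasDerivAt.fun_sum fun i _ => by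
      simpa using ((hasDerivAt_id σ).add_const (d i)).log (hσ i)
  have hquad : HasDerivAt (fun s => ∑ i, (s + d i)⁻¹ * w i ^ 2)
      (∑ i, -1 / (σ + d i) ^ 2 * w i ^ 2) σ :=
    HasDerivAt.fun_sum fun i _ => by
      simpa using (((hasDerivAt_id σ).add_const (d i)).inv (hσ i)).mul_const (w i ^ 2)
  have hdiag : ∀ f : n → ℝ, w ⬝ᵥ (diagonal f *ᵥ w) = ∑ i, f i * w i ^ 2 := fun f =>
    Finset.sum_congr rfl fun i _ => by rw [mulVec_diagonal]; ring
  refine (hlog.add hquad).congr_of_eventuallyEq ?_ |>.congr_deriv ?_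
  · filter_upwards [hnear] with s hs
    rw [det_diagonal, Real.log_prod fun i _ => hs i, inv_diagonal_of_ne_zero hs, hdiag]
    rfl
  · rw [inv_diagonal_of_ne_zero hσ, diagonal_mul_diagonal, trace_diagonal, hdiag,
      sub_eq_add_neg, ← Finset.sum_neg_distrib]
    congr 1
    refine Finset.sum_congr rfl fun i _ => ?_
    simp only [Pi.inv_apply]
    field_simp

theorem IsHermitian.hasDerivAt_log_det_smul_one_add_dotProduct_inv_mulVec
    {A : Matrix n n ℝ} (hA : A.IsHermitian) (v : n → ℝ) {σ : ℝ} (hσ : (σ • 1 + A).det ≠ 0) :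
    HasDerivAt (fun s => Real.log (s • 1 + A).det + v ⬝ᵥ ((s • 1 + A)⁻¹ *ᵥ v))
      (trace (σ • 1 + A)⁻¹ - v ⬝ᵥ (((σ • 1 + A)⁻¹ * (σ • 1 + A)⁻¹) *ᵥ v)) σ := by
  have hU := hA.eigenvectorUnitary.2
  set U : Matrix n n ℝ := (hA.eigenvectorUnitary : Matrix n n ℝ)
  have hσ' : ∀ i, σ + hA.eigenvalues i ≠ 0 := by
    rw [hA.smul_one_add_eq, det_unitary_conj hU, det_diagonal] at hσ
    exact fun i => Finset.prod_ne_zero_iff.1 hσ i (Finset.mem_univ i)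
  convert hasDerivAt_log_det_diagonal_add_dotProduct_inv_mulVec hA.eigenvalues (star U *ᵥ v) hσ'
    using 1
  · funext s
    rw [hA.smul_one_add_eq, det_unitary_conj hU, inv_unitary_conj hU,
      dotProduct_conj_mulVec]
  · rw [hA.smul_one_add_eq, inv_unitary_conj hU, unitary_conj_mul_unitary_conj hU,
      trace_unitary_conj hU, dotProduct_conj_mulVec]

end Matrix

namespace ProbabilityTheory

variable {Ω ι : Type*} [MeasurableSpace Ω] {μ : Measure Ω} [Fintype ι] {Z : ι → Ω → ℝ}

theorem integrable_dotProduct_mulVec_of_memLp_two (hZ : ∀ a, MemLp (Z a) 2 μ)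
    (K : Matrix ι ι ℝ) :
    Integrable (fun ω => (fun a => Z a ω) ⬝ᵥ (K *ᵥ fun a => Z a ω)) μ := by
  simp_rw [dotProduct_mulVec_self_eq_sum]
  exact integrable_finsetSum _ fun b _ => integrable_finsetSum _ fun a _ =>
    ((hZ a).integrable_mul (hZ b)).const_mul (K a b)

theorem integral_dotProduct_mulVec_of_pairwise_indepFun [DecidableEq ι]
    (hindep : Pairwise fun a b => IndepFun (Z a) (Z b) μ) (hZ : ∀ a, MemLp (Z a) 2 μ)
    (hmean : ∀ a, ∫ ω, Z a ω ∂μ = 0) (K : Matrix ι ι ℝ) :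
    ∫ ω, (fun a => Z a ω) ⬝ᵥ (K *ᵥ fun a => Z a ω) ∂μ
      = trace (K * diagonal fun a => ∫ ω, Z a ω ^ 2 ∂μ) := by
  have hint : ∀ a b, Integrable (fun ω => Z a ω * Z b ω) μ := fun a b =>
    (hZ a).integrable_mul (hZ b)
  have hcross : ∀ a b, a ≠ b → ∫ ω, Z a ω * Z b ω ∂μ = 0 := fun a b hab => by
    rw [(hindep hab).integral_fun_mul_eq_mul_integral (hZ a).1 (hZ b).1, hmean, zero_mul]
  simp_rw [dotProduct_mulVec_self_eq_sum]
  rw [integral_finsetSum _ fun b _ => integrable_finsetSum _ fun a _ => (hint a b).const_mul _]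
  refine Finset.sum_congr rfl fun b _ => ?_
  rw [integral_finsetSum _ fun a _ => (hint a b).const_mul _, Finset.sum_eq_single b
    (fun a _ hab => by rw [integral_const_mul, hcross a b hab, mul_zero]) (by simp),
    integral_const_mul, diag_apply, mul_diagonal]
  simp_rw [sq]

end ProbabilityTheory

namespace PSAR

section NoiseCoef

variable {n m : Type*} [Fintype n] [Fintype m] [DecidableEq n]

def covariateNoiseCoef (b : m → ℝ) : Matrix n (n × m) ℝ :=
  of fun i q => if i = q.1 then -b q.2 else 0

def noiseCoef (S : Matrix n n ℝ) (b : m → ℝ) : Matrix n (n ⊕ n ⊕ n × m) ℝ :=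
  fromCols 1 (fromCols S (covariateNoiseCoef b))

def noiseVar (σ2 lam2 lamx2 : ℝ) : n ⊕ n ⊕ n × m → ℝ :=
  Sum.elim (fun _ => σ2) (Sum.elim (fun _ => lam2) fun _ => lamx2)

-- Without the explicit index types, rectangular products here elaborate with `CStarMatrix`'s
-- `HMul` instance instead of `Matrix`'s.
theorem covariateNoiseCoef_mul_transpose (b : m → ℝ) :
    covariateNoiseCoef (n := n) b * (covariateNoiseCoef (n := n) b)ᵀ
      = (∑ k, b k ^ 2) • (1 : Matrix n n ℝ) := by
  ext i j
  rcases eq_or_ne i j with rfl | hij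
  · simp [covariateNoiseCoef, mul_apply, Fintype.sum_prod_type, sq]
  · simp [covariateNoiseCoef, mul_apply, Fintype.sum_prod_type, hij]

theorem noiseCoef_mul_diagonal_noiseVar_mul_transpose [DecidableEq m] (S : Matrix n n ℝ)
    (b : m → ℝ) (σ2 lam2 lamx2 : ℝ) :
    noiseCoef S b * diagonal (noiseVar σ2 lam2 lamx2 : n ⊕ n ⊕ n × m → ℝ) * (noiseCoef S b)ᵀ
      = σ2 • 1 + lam2 • (S * Sᵀ) + (lamx2 * ∑ k, b k ^ 2) • 1 := by
  simp only [noiseCoef, noiseVar, ← fromBlocks_diagonal, fromCols_mul_fromBlocks,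
    transpose_fromCols, fromCols_mul_fromRows, Matrix.mul_zero, add_zero, zero_add,
    ← smul_one_eq_diagonal, Matrix.mul_smul, Matrix.mul_one, Matrix.smul_mul,
    transpose_one, covariateNoiseCoef_mul_transpose, smul_smul, add_assoc]

end NoiseCoef

noncomputable def residual {N p1 p2 : ℕ} (W : Matrix (Fin N) (Fin N) ℝ)
    (X : Matrix (Fin N) (Fin p1 ⊕ Fin p2) ℝ) (Ys : Fin N → ℝ) (ρ : ℝ)
    (β : Fin p1 ⊕ Fin p2 → ℝ) : Fin N → ℝ :=
  Smat W ρ *ᵥ Ys - X *ᵥ β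

theorem Omat_posDef {N : ℕ} (W : Matrix (Fin N) (Fin N) ℝ) (ρ : ℝ) {lam2 σ2 : ℝ}
    (hσ : 0 < σ2) (hlam : 0 ≤ lam2) : (Omat W lam2 ρ σ2).PosDef :=
  (PosDef.one.smul hσ).add_posSemidef ((posSemidef_self_mul_conjTranspose (Smat W ρ)).smul hlam)

theorem hasDerivAt_nll_sigma {N p1 p2 : ℕ} (W : Matrix (Fin N) (Fin N) ℝ) {lam2 : ℝ}
    (X : Matrix (Fin N) (Fin p1 ⊕ Fin p2) ℝ) (Ys : Fin N → ℝ) (ρ : ℝ)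
    (β : Fin p1 ⊕ Fin p2 → ℝ) {σ2 : ℝ} (hσ : 0 < σ2) (hlam : 0 ≤ lam2) :
    HasDerivAt (fun s => nll W lam2 X Ys ρ β s)
      (1 / 2 * (trace (Omat W lam2 ρ σ2)⁻¹ - residual W X Ys ρ β
        ⬝ᵥ (((Omat W lam2 ρ σ2)⁻¹ * (Omat W lam2 ρ σ2)⁻¹) *ᵥ residual W X Ys ρ β))) σ2 := by
  have hA : (lam2 • (Smat W ρ * (Smat W ρ)ᵀ)).IsHermitian :=
    ((posSemidef_self_mul_conjTranspose (Smat W ρ)).smul hlam).1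
  have h := hA.hasDerivAt_log_det_smul_one_add_dotProduct_inv_mulVec
    (residual W X Ys ρ β) (Omat_posDef W ρ hσ hlam).det_pos.ne'
  have hnll : (fun s => nll W lam2 X Ys ρ β s) = fun s => -Real.log (Smat W ρ).det
      + 1 / 2 * (Real.log (Omat W lam2 ρ s).det
        + residual W X Ys ρ β ⬝ᵥ ((Omat W lam2 ρ s)⁻¹ *ᵥ residual W X Ys ρ β)) := by
    funext s
    rw [nll, residual]
    ring
  rw [hnll]
  exact (h.const_mul (1 / 2)).const_add _

section NoiseModel

variable {Ωs : Type*} {N p1 p2 : ℕ}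
  {W : Matrix (Fin N) (Fin N) ℝ} {ρ0 : ℝ} (X : Matrix (Fin N) (Fin p1 ⊕ Fin p2) ℝ)
  (β0 : Fin p1 ⊕ Fin p2 → ℝ) {E ε : Ωs → Fin N → ℝ} {Ex : Ωs → Fin N → Fin p2 → ℝ}

theorem residual_eq_noiseCoef_mulVec (hS : IsUnit (Smat W ρ0).det) (ω : Ωs) :
    residual W (Xobs X (Ex ω)) (Yobs W ρ0 X β0 (E ω) (ε ω)) ρ0 β0
      = noiseCoef (Smat W ρ0) (fun k => β0 (Sum.inr k)) *ᵥ fun z => noiseFam E ε Ex z ω := by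
  have hcov : (of fun i j => Sum.elim (fun _ => (0 : ℝ)) (fun k => Ex ω i k) j) *ᵥ β0
      = -(covariateNoiseCoef (fun k => β0 (Sum.inr k)) *ᵥ fun q => Ex ω q.1 q.2) := by
    ext i
    simp [mulVec, dotProduct, covariateNoiseCoef, Fintype.sum_sum_type, Fintype.sum_prod_type,
      mul_comm]
  change _ = _ *ᵥ Sum.elim (E ω) (Sum.elim (ε ω) fun q : Fin N × Fin p2 => Ex ω q.1 q.2)
  rw [residual, noiseCoef, fromCols_mulVec_sumElim, fromCols_mulVec_sumElim, one_mulVec, Yobs,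
    Xobs, mulVec_add, mulVec_mulVec, mul_nonsing_inv _ hS, one_mulVec, add_mulVec, hcov]
  abel

variable [MeasurableSpace Ωs] {μ : Measure Ωs}

theorem integrable_residual_dotProduct_mulVec (hS : IsUnit (Smat W ρ0).det)
    (hZ : ∀ z, MemLp (noiseFam E ε Ex z) 2 μ) (M : Matrix (Fin N) (Fin N) ℝ) :
    Integrable (fun ω => residual W (Xobs X (Ex ω)) (Yobs W ρ0 X β0 (E ω) (ε ω)) ρ0 β0
      ⬝ᵥ (M *ᵥ residual W (Xobs X (Ex ω)) (Yobs W ρ0 X β0 (E ω) (ε ω)) ρ0 β0)) μ := by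
  simp_rw [residual_eq_noiseCoef_mulVec X β0 hS, dotProduct_transpose_mul_mul_mulVec]
  exact integrable_dotProduct_mulVec_of_memLp_two hZ _

theorem integral_residual_dotProduct_mulVec {σ02 lam2 lamx2 : ℝ} (hS : IsUnit (Smat W ρ0).det)
    (hindep : iIndepFun (noiseFam E ε Ex) μ) (hZ : ∀ z, MemLp (noiseFam E ε Ex z) 2 μ)
    (hmean : ∀ z, ∫ ω, noiseFam E ε Ex z ω ∂μ = 0)
    (hEvar : ∀ i, ∫ ω, (E ω i) ^ 2 ∂μ = σ02)
    (hepsvar : ∀ i, ∫ ω, (ε ω i) ^ 2 ∂μ = lam2)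
    (hExvar : ∀ i j, ∫ ω, (Ex ω i j) ^ 2 ∂μ = lamx2) (M : Matrix (Fin N) (Fin N) ℝ) :
    ∫ ω, residual W (Xobs X (Ex ω)) (Yobs W ρ0 X β0 (E ω) (ε ω)) ρ0 β0
        ⬝ᵥ (M *ᵥ residual W (Xobs X (Ex ω)) (Yobs W ρ0 X β0 (E ω) (ε ω)) ρ0 β0) ∂μ
      = trace (M * (Omat W lam2 ρ0 σ02 + (lamx2 * ∑ k, β0 (Sum.inr k) ^ 2) • 1)) := by
  have hvar : (fun z => ∫ ω, noiseFam E ε Ex z ω ^ 2 ∂μ) = noiseVar σ02 lam2 lamx2 := by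
    funext z
    rcases z with i | i | ⟨i, k⟩
    exacts [hEvar i, hepsvar i, hExvar i k]
  simp_rw [residual_eq_noiseCoef_mulVec X β0 hS, dotProduct_transpose_mul_mul_mulVec]
  rw [integral_dotProduct_mulVec_of_pairwise_indepFun (fun a b hab => hindep.indepFun hab) hZ
    hmean, hvar, Matrix.mul_assoc, Matrix.mul_assoc, trace_mul_comm, Matrix.mul_assoc,
    noiseCoef_mul_diagonal_noiseVar_mul_transpose, Omat]

end NoiseModel

theorem statement_3_general
    {Ωs : Type*} [MeasurableSpace Ωs] (μ : Measure Ωs) [IsProbabilityMeasure μ]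
    (N p1 p2 : ℕ)
    (W : Matrix (Fin N) (Fin N) ℝ)
    (X : Matrix (Fin N) (Fin p1 ⊕ Fin p2) ℝ)
    (ρ0 : ℝ) (β0 : Fin p1 ⊕ Fin p2 → ℝ) (σ02 lam2 lamx2 : ℝ)
    (hσ : 0 < σ02) (hlam : 0 < lam2)
    (hS0 : 0 < (Smat W ρ0).det)
    (E ε : Ωs → Fin N → ℝ) (Ex : Ωs → Fin N → Fin p2 → ℝ)
    (hindep : iIndepFun (noiseFam E ε Ex) μ)
    (hmom : ∀ z, MemLp (noiseFam E ε Ex z) 4 μ)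
    (hmean : ∀ z, ∫ ω, noiseFam E ε Ex z ω ∂μ = 0)
    (hEvar : ∀ i, ∫ ω, (E ω i) ^ 2 ∂μ = σ02)
    (hepsvar : ∀ i, ∫ ω, (ε ω i) ^ 2 ∂μ = lam2)
    (hExvar : ∀ i j, ∫ ω, (Ex ω i j) ^ 2 ∂μ = lamx2) :
    ∫ ω, deriv (fun s =>
        nll W lam2 (Xobs X (Ex ω)) (Yobs W ρ0 X β0 (E ω) (ε ω)) ρ0 β0 s) σ02 ∂μ
      = -(1 / 2) * lamx2 * (∑ k, β0 (Sum.inr k) ^ 2) *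
          Matrix.trace ((Omat W lam2 ρ0 σ02)⁻¹ * (Omat W lam2 ρ0 σ02)⁻¹)
  := by
  have hΩ : IsUnit (Omat W lam2 ρ0 σ02).det := (Omat_posDef W ρ0 hσ hlam.le).det_pos.ne'.isUnit
  have hS : IsUnit (Smat W ρ0).det := hS0.ne'.isUnit
  have hZ : ∀ z, MemLp (noiseFam E ε Ex z) 2 μ := fun z => (hmom z).mono_exponent (by norm_num)
  simp_rw [(hasDerivAt_nll_sigma W _ _ ρ0 β0 hσ hlam.le).deriv]
  rw [integral_const_mul, integral_sub (integrable_const _)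
      (integrable_residual_dotProduct_mulVec X β0 hS hZ _), integral_const,
    integral_residual_dotProduct_mulVec X β0 hS hindep hZ hmean hEvar hepsvar hExvar,
    trace_inv_mul_inv_mul_add_smul_one hΩ, probReal_univ, one_smul]
  ring

theorem statement_3
    {Ωs : Type*} [MeasurableSpace Ωs] (μ : Measure Ωs) [IsProbabilityMeasure μ]
    (N p1 p2 : ℕ) (hN : 0 < N) (hp1 : 0 < p1) (hp2 : 0 < p2)
    (W : Matrix (Fin N) (Fin N) ℝ) (hW : ∀ i, W i i = 0)
    (X : Matrix (Fin N) (Fin p1 ⊕ Fin p2) ℝ)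
    (ρ0 : ℝ) (β0 : Fin p1 ⊕ Fin p2 → ℝ) (σ02 lam2 lamx2 : ℝ)
    (hσ : 0 < σ02) (hlam : 0 < lam2) (hlamx : 0 < lamx2)
    (hS0 : 0 < (Smat W ρ0).det)
    (E ε : Ωs → Fin N → ℝ) (Ex : Ωs → Fin N → Fin p2 → ℝ)
    (hindep : iIndepFun (noiseFam E ε Ex) μ)
    (hmom : ∀ z, MemLp (noiseFam E ε Ex z) 4 μ)
    (hmean : ∀ z, ∫ ω, noiseFam E ε Ex z ω ∂μ = 0)
    (hEvar : ∀ i, ∫ ω, (E ω i) ^ 2 ∂μ = σ02)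
    (hepsvar : ∀ i, ∫ ω, (ε ω i) ^ 2 ∂μ = lam2)
    (hExvar : ∀ i j, ∫ ω, (Ex ω i j) ^ 2 ∂μ = lamx2) :
    ∫ ω, deriv (fun s =>
        nll W lam2 (Xobs X (Ex ω)) (Yobs W ρ0 X β0 (E ω) (ε ω)) ρ0 β0 s) σ02 ∂μ
      = -(1 / 2) * lamx2 * (∑ k, β0 (Sum.inr k) ^ 2) *
          Matrix.trace ((Omat W lam2 ρ0 σ02)⁻¹ * (Omat W lam2 ρ0 σ02)⁻¹) :=
  statement_3_general μ N p1 p2 W X ρ0 β0 σ02 lam2 lamx2 hσ hlam hS0 E ε Ex hindep hmom hmean hEvar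
    hepsvar hExvar

end PSAR
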